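/- In the c-class GAMO setting, for any fixed family of generated densities (p_i^g), the supremum of the GAMO objective J over all measurable classifiers M : X → (0,1)^c is attained at the classifier M* given coordinatewise by M*_i(x) = α_i(x)/(α_i(x)+β_i(x)) for μ-almost every x with α_i(x)+β_i(x) > 0; i.e., for every measurable M : X → (0,1)^c, J(M) ≤ J(M*) = Σ_{i=1}^c ∫ [α_i·log(α_i/(α_i+β_i)) + β_i·log(β_i/(α_i+β_i))] dμ (convention 0·log 0 = 0), assuming each integrand on the right is μ-integrable. -/

import Mathlib

open MeasureTheory

lemma gamo_term_nonpos (a b : ℝ) (ha : 0 ≤ a) (hb : 0 ≤ b) :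
    a * Real.log (a / (a + b)) ≤ 0 := by
  rcases eq_or_lt_of_le ha with ha0 | ha'
  · simp [← ha0]
  · have hl : Real.log (a / (a + b)) ≤ 0 :=
      Real.log_nonpos (by positivity) ((div_le_one (by positivity)).mpr (by linarith))
    exact mul_nonpos_of_nonneg_of_nonpos ha hl

lemma gamo_term_nonpos' (a b : ℝ) (ha : 0 ≤ a) (hb : 0 ≤ b) :
    b * Real.log (b / (a + b)) ≤ 0 := by
  rw [add_comm]
  exact gamo_term_nonpos b a hb ha

lemma gamo_nonpos (a b : ℝ) (ha : 0 ≤ a) (hb : 0 ≤ b) :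
    a * Real.log (a / (a + b)) + b * Real.log (b / (a + b)) ≤ 0 := by
  linarith [gamo_term_nonpos a b ha hb, gamo_term_nonpos' a b ha hb]

lemma gamo_key (a b t : ℝ) (ha : 0 ≤ a) (hb : 0 ≤ b) (ht0 : 0 < t) (ht1 : t < 1) :
    a * Real.log t + b * Real.log (1 - t) ≤
      a * Real.log (a / (a + b)) + b * Real.log (b / (a + b)) := by
  have h1t : 0 < 1 - t := by linarith
  rcases eq_or_lt_of_le ha with ha0 | ha
  · rcases eq_or_lt_of_le hb with hb0 | hb
    · simp [← ha0, ← hb0]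
    · have e : b / (0 + b) = 1 := by field_simp; ring
      rw [← ha0, e]
      have hl : Real.log (1 - t) ≤ 0 := Real.log_nonpos (by linarith) (by linarith)
      have := mul_nonpos_of_nonneg_of_nonpos hb.le hl
      simp only [zero_mul, Real.log_one, mul_zero, zero_add, add_zero]
      linarith
  · rcases eq_or_lt_of_le hb with hb0 | hb
    · have e : a / (a + 0) = 1 := by field_simp; ring
      rw [← hb0, e]
      have hl : Real.log t ≤ 0 := Real.log_nonpos (by linarith) (by linarith)
      have := mul_nonpos_of_nonneg_of_nonpos ha.le hl
      simp only [zero_mul, Real.log_one, mul_zero, zero_add, add_zero]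
      linarith
    · set s := a + b with hs
      have hspos : 0 < s := by positivity
      have e1 : Real.log t = Real.log (t * s / a) + Real.log (a / s) := by
        have hx : (0:ℝ) < t * s / a := by positivity
        have hy : (0:ℝ) < a / s := by positivity
        have he : (t * s / a) * (a / s) = t := by field_simp
        rw [← Real.log_mul hx.ne' hy.ne', he]
      have e2 : Real.log (1 - t) = Real.log ((1 - t) * s / b) + Real.log (b / s) := by
        have hx : (0:ℝ) < (1 - t) * s / b := by positivity
        have hy : (0:ℝ) < b / s := by positivity
        have he : ((1 - t) * s / b) * (b / s) = 1 - t := by field_simp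
        rw [← Real.log_mul hx.ne' hy.ne', he]
      have l1 : Real.log (t * s / a) ≤ t * s / a - 1 :=
        Real.log_le_sub_one_of_pos (by positivity)
      have l2 : Real.log ((1 - t) * s / b) ≤ (1 - t) * s / b - 1 :=
        Real.log_le_sub_one_of_pos (by positivity)
      have m1 : a * Real.log (t * s / a) ≤ t * s - a := by
        calc a * Real.log (t * s / a) ≤ a * (t * s / a - 1) :=
              mul_le_mul_of_nonneg_left l1 ha.le
          _ = t * s - a := by field_simp
      have m2 : b * Real.log ((1 - t) * s / b) ≤ (1 - t) * s - b := by
        calc b * Real.log ((1 - t) * s / b) ≤ b * ((1 - t) * s / b - 1) :=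
              mul_le_mul_of_nonneg_left l2 hb.le
          _ = (1 - t) * s - b := by field_simp
      rw [e1, e2]
      nlinarith

/-- In the `c`-class GAMO setting (σ-finite measure space `(X, μ)`; positive,
nondecreasing class priors `P` summing to `1`; real densities `pd i` and generated
densities `pg i` integrating to `1`; `α i = P i · pd i + (P c - P i) · pg i` and
`β i = ∑_{j ≠ i} α j`), for any fixed family of generated densities the supremum of
the GAMO objective `J(M) = ∑ i (∫ α i · log (M i) dμ + ∫ β i · log (1 - M i) dμ)`
over measurable classifiers `M : X → (0,1)^c` is attained at
`M⋆ i = α i / (α i + β i)`: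
for every classifier `M`, `J(M) ≤ J(M⋆) = ∑ i ∫ (α i · log (α i/(α i+β i)) +
β i · log (β i/(α i+β i))) dμ` (convention `0·log 0 = 0`, as in Lean), assuming each
right-hand integrand is μ-integrable.  Since each integrand of `J(M)` is nonpositive,
the possibly `-∞` value `J(M)` is rendered as minus a sum of `lintegral`s of the
negated integrands. -/
theorem gamo_classifier_sup (X : Type*) [MeasurableSpace X]
    (μ : Measure X) [SigmaFinite μ]
    (c : ℕ) (hc : 2 ≤ c)
    (P : Fin c → ℝ) (hP_pos : ∀ i, 0 < P i)
    (hP_mono : ∀ i j : Fin c, i ≤ j → P i ≤ P j)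
    (hP_sum : ∑ i, P i = 1)
    (pd pg : Fin c → X → ℝ)
    (hpd_meas : ∀ i, Measurable (pd i)) (hpg_meas : ∀ i, Measurable (pg i))
    (hpd_nonneg : ∀ i x, 0 ≤ pd i x) (hpg_nonneg : ∀ i x, 0 ≤ pg i x)
    (hpd_int : ∀ i, ∫ x, pd i x ∂μ = 1) (hpg_int : ∀ i, ∫ x, pg i x ∂μ = 1)
    (Pc : ℝ) (hPc : Pc = P ⟨c - 1, by omega⟩)
    (α β : Fin c → X → ℝ)
    (hα : ∀ i x, α i x = P i * pd i x + (Pc - P i) * pg i x)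
    (hβ : ∀ i x, β i x = ∑ j ∈ Finset.univ.erase i, α j x)
    (hint : ∀ i, Integrable (fun x =>
      α i x * Real.log (α i x / (α i x + β i x)) +
        β i x * Real.log (β i x / (α i x + β i x))) μ) :
    (∀ M : X → Fin c → ℝ, Measurable M → (∀ x i, M x i ∈ Set.Ioo (0 : ℝ) 1) →
      ENNReal.ofReal (-(∑ i, ∫ x, (α i x * Real.log (α i x / (α i x + β i x)) +
          β i x * Real.log (β i x / (α i x + β i x))) ∂μ)) ≤
        ∑ i, ((∫⁻ x, ENNReal.ofReal (-(α i x * Real.log (M x i))) ∂μ) +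
          ∫⁻ x, ENNReal.ofReal (-(β i x * Real.log (1 - M x i))) ∂μ)) ∧
    (∑ i, ((∫ x, α i x * Real.log (α i x / (α i x + β i x)) ∂μ) +
        ∫ x, β i x * Real.log (1 - α i x / (α i x + β i x)) ∂μ) =
      ∑ i, ∫ x, (α i x * Real.log (α i x / (α i x + β i x)) +
        β i x * Real.log (β i x / (α i x + β i x))) ∂μ) := by
  -- basic positivity facts
  have hPc_ge : ∀ i, P i ≤ Pc := by
    intro i
    rw [hPc]
    exact hP_mono i ⟨c - 1, by omega⟩ (by
      rw [Fin.le_def]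
      exact Nat.le_sub_one_of_lt i.isLt)
  have hα_nonneg : ∀ i x, 0 ≤ α i x := by
    intro i x
    rw [hα]
    have h1 : 0 ≤ P i * pd i x := mul_nonneg (hP_pos i).le (hpd_nonneg i x)
    have h2 : 0 ≤ (Pc - P i) * pg i x :=
      mul_nonneg (sub_nonneg.mpr (hPc_ge i)) (hpg_nonneg i x)
    linarith
  have hβ_nonneg : ∀ i x, 0 ≤ β i x := by
    intro i x
    rw [hβ]
    exact Finset.sum_nonneg fun j _ => hα_nonneg j x
  have hα_meas : ∀ i, Measurable (α i) := by
    intro i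
    have : α i = fun x => P i * pd i x + (Pc - P i) * pg i x := funext (hα i)
    rw [this]
    exact ((hpd_meas i).const_mul _).add ((hpg_meas i).const_mul _)
  have hβ_meas : ∀ i, Measurable (β i) := by
    intro i
    have : β i = fun x => ∑ j ∈ Finset.univ.erase i, α j x := funext (hβ i)
    rw [this]
    exact Finset.measurable_sum _ fun j _ => hα_meas j
  have hA_meas : ∀ i, Measurable (fun x => α i x * Real.log (α i x / (α i x + β i x))) :=
    fun i => (hα_meas i).mul
      (Real.measurable_log.comp ((hα_meas i).div ((hα_meas i).add (hβ_meas i))))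
  have hB_meas : ∀ i, Measurable (fun x => β i x * Real.log (β i x / (α i x + β i x))) :=
    fun i => (hβ_meas i).mul
      (Real.measurable_log.comp ((hβ_meas i).div ((hα_meas i).add (hβ_meas i))))
  have hA_nonpos : ∀ i x, α i x * Real.log (α i x / (α i x + β i x)) ≤ 0 :=
    fun i x => gamo_term_nonpos _ _ (hα_nonneg i x) (hβ_nonneg i x)
  have hB_nonpos : ∀ i x, β i x * Real.log (β i x / (α i x + β i x)) ≤ 0 :=
    fun i x => gamo_term_nonpos' _ _ (hα_nonneg i x) (hβ_nonneg i x)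
  have hA_int : ∀ i, Integrable (fun x => α i x * Real.log (α i x / (α i x + β i x))) μ := by
    intro i
    refine (hint i).mono (hA_meas i).aestronglyMeasurable (ae_of_all _ fun x => ?_)
    rw [Real.norm_eq_abs, Real.norm_eq_abs, abs_of_nonpos (hA_nonpos i x),
      abs_of_nonpos (by linarith [hA_nonpos i x, hB_nonpos i x])]
    linarith [hB_nonpos i x]
  have hB_int : ∀ i, Integrable (fun x => β i x * Real.log (β i x / (α i x + β i x))) μ := by
    intro i
    refine (hint i).mono (hB_meas i).aestronglyMeasurable (ae_of_all _ fun x => ?_)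
    rw [Real.norm_eq_abs, Real.norm_eq_abs, abs_of_nonpos (hB_nonpos i x),
      abs_of_nonpos (by linarith [hA_nonpos i x, hB_nonpos i x])]
    linarith [hA_nonpos i x]
  constructor
  · -- the inequality
    intro M hM hM01
    have hMi_meas : ∀ i, Measurable (fun x => M x i) :=
      fun i => (measurable_pi_apply i).comp hM
    have step1 : -(∑ i, ∫ x, (α i x * Real.log (α i x / (α i x + β i x)) +
        β i x * Real.log (β i x / (α i x + β i x))) ∂μ) =
        ∑ i, ∫ x, -(α i x * Real.log (α i x / (α i x + β i x)) +
          β i x * Real.log (β i x / (α i x + β i x))) ∂μ := by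
      rw [← Finset.sum_neg_distrib]
      exact Finset.sum_congr rfl fun i _ => (integral_neg _).symm
    rw [step1, ENNReal.ofReal_sum_of_nonneg (fun i _ =>
      integral_nonneg fun x => by
        simp only [Pi.zero_apply]
        linarith [gamo_nonpos (α i x) (β i x) (hα_nonneg i x) (hβ_nonneg i x)])]
    refine Finset.sum_le_sum fun i _ => ?_
    have heq : ENNReal.ofReal (∫ x, -(α i x * Real.log (α i x / (α i x + β i x)) +
        β i x * Real.log (β i x / (α i x + β i x))) ∂μ) =
        ∫⁻ x, ENNReal.ofReal (-(α i x * Real.log (α i x / (α i x + β i x)) +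
          β i x * Real.log (β i x / (α i x + β i x)))) ∂μ :=
      ofReal_integral_eq_lintegral_ofReal (hint i).neg (ae_of_all _ fun x => by
        simp only [Pi.zero_apply]
        linarith [gamo_nonpos (α i x) (β i x) (hα_nonneg i x) (hβ_nonneg i x)])
    rw [heq]
    have hg1_meas : Measurable (fun x => ENNReal.ofReal (-(α i x * Real.log (M x i)))) :=
      (((hα_meas i).mul (Real.measurable_log.comp (hMi_meas i))).neg).ennreal_ofReal
    calc ∫⁻ x, ENNReal.ofReal (-(α i x * Real.log (α i x / (α i x + β i x)) +
          β i x * Real.log (β i x / (α i x + β i x)))) ∂μ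
        ≤ ∫⁻ x, (ENNReal.ofReal (-(α i x * Real.log (M x i))) +
            ENNReal.ofReal (-(β i x * Real.log (1 - M x i)))) ∂μ := by
          refine lintegral_mono fun x => ?_
          have ht := hM01 x i
          have hkey := gamo_key (α i x) (β i x) (M x i) (hα_nonneg i x) (hβ_nonneg i x)
            ht.1 ht.2
          have hn1 : 0 ≤ -(α i x * Real.log (M x i)) := by
            have : Real.log (M x i) ≤ 0 := Real.log_nonpos ht.1.le ht.2.le
            nlinarith [hα_nonneg i x, mul_nonpos_of_nonneg_of_nonpos (hα_nonneg i x) this]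
          have hn2 : 0 ≤ -(β i x * Real.log (1 - M x i)) := by
            have : Real.log (1 - M x i) ≤ 0 := Real.log_nonpos (by linarith [ht.2]) (by linarith [ht.1])
            nlinarith [mul_nonpos_of_nonneg_of_nonpos (hβ_nonneg i x) this]
          calc ENNReal.ofReal (-(α i x * Real.log (α i x / (α i x + β i x)) +
                β i x * Real.log (β i x / (α i x + β i x))))
              ≤ ENNReal.ofReal (-(α i x * Real.log (M x i)) +
                  -(β i x * Real.log (1 - M x i))) :=
                ENNReal.ofReal_le_ofReal (by linarith)
            _ = ENNReal.ofReal (-(α i x * Real.log (M x i))) +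
                  ENNReal.ofReal (-(β i x * Real.log (1 - M x i))) :=
                ENNReal.ofReal_add hn1 hn2
      _ = (∫⁻ x, ENNReal.ofReal (-(α i x * Real.log (M x i))) ∂μ) +
            ∫⁻ x, ENNReal.ofReal (-(β i x * Real.log (1 - M x i))) ∂μ :=
          lintegral_add_left hg1_meas _
  · -- the equality
    refine Finset.sum_congr rfl fun i _ => ?_
    have hpt : ∀ x, β i x * Real.log (1 - α i x / (α i x + β i x)) =
        β i x * Real.log (β i x / (α i x + β i x)) := by
      intro x
      rcases eq_or_lt_of_le (hβ_nonneg i x) with h0 | h0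
      · rw [← h0]
        ring
      · have hs : 0 < α i x + β i x := by linarith [hα_nonneg i x]
        have : 1 - α i x / (α i x + β i x) = β i x / (α i x + β i x) := by
          field_simp
          ring
        rw [this]
    have : (∫ x, β i x * Real.log (1 - α i x / (α i x + β i x)) ∂μ) =
        ∫ x, β i x * Real.log (β i x / (α i x + β i x)) ∂μ :=
      integral_congr_ae (ae_of_all _ hpt)
    rw [this, ← integral_add (hA_int i) (hB_int i)]
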